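/- arXiv:2502.10069 — 2 statements merged into one kernel-verified Lean document; each statement's English description precedes it below -/
import Mathlib

section
/- Let f : ℝ → ℝ be C¹ with |f'(s)| ≤ α for all s ∈ [min(a,b), max(a,b)]. Then the state u* = (a + b)/2 - (f(a) - f(b))/(2α) satisfies min(a, b) ≤ u* ≤ max(a, b). -/
/-! By the mean value theorem `|f a - f b| ≤ α |a - b|`, so the correction
`(f a - f b) / (2α)` moves the midpoint of `a` and `b` by at most half their distance.
When `α = 0` the correction is the junk value `0`, which is harmless since then `f a = f b`. -/

open Set

theorem abs_sub_le_mul_abs_sub_of_abs_deriv_le {f : ℝ → ℝ} {a b C : ℝ}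
    (hf : ∀ x ∈ uIcc a b, DifferentiableAt ℝ f x) (hC : ∀ x ∈ uIcc a b, |deriv f x| ≤ C) :
    |f a - f b| ≤ C * |a - b| :=
  (convex_uIcc a b).norm_image_sub_le_of_norm_deriv_le hf hC right_mem_uIcc left_mem_uIcc

theorem abs_div_le_of_abs_le_mul {d α c : ℝ} (hc : 0 ≤ c) (h : |d| ≤ α * c) : |d / α| ≤ c := by
  rw [abs_div]
  refine div_le_of_le_mul₀ (abs_nonneg α) hc ?_
  calc |d| ≤ α * c := h
    _ ≤ |α| * c := mul_le_mul_of_nonneg_right (le_abs_self α) hc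
    _ = c * |α| := mul_comm _ _

theorem mem_uIcc_of_abs_sub_midpoint_le {a b x : ℝ} (h : |x - (a + b) / 2| ≤ |a - b| / 2) :
    x ∈ uIcc a b := by
  rw [mem_uIcc]
  rcases abs_le.mp h with ⟨hlo, hhi⟩
  rcases le_total a b with hab | hab
  · rw [abs_of_nonpos (sub_nonpos.mpr hab)] at hlo hhi
    exact Or.inl ⟨by linarith, by linarith⟩
  · rw [abs_of_nonneg (sub_nonneg.mpr hab)] at hlo hhi
    exact Or.inr ⟨by linarith, by linarith⟩

/-- The Lax–Friedrichs intermediate state between `a` and `b` lies between `a` and `b`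
whenever `α` bounds the wave speed `|f'|` on the interval between them. -/
theorem lax_friedrichs_intermediate_state_bounds (f : ℝ → ℝ) (a b α : ℝ)
    (hf : ContDiff ℝ 1 f)
    (hspeed : ∀ s ∈ Set.uIcc a b, |deriv f s| ≤ α) :
    min a b ≤ (a + b) / 2 - (f a - f b) / (2 * α) ∧
      (a + b) / 2 - (f a - f b) / (2 * α) ≤ max a b := by
  have hlip : |f a - f b| ≤ α * |a - b| :=
    abs_sub_le_mul_abs_sub_of_abs_deriv_le
      (fun x _ => (hf.differentiable one_ne_zero).differentiableAt) hspeed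
  have hshift : |(f a - f b) / (2 * α)| ≤ |a - b| / 2 :=
    abs_div_le_of_abs_le_mul (by positivity) (by linarith)
  exact mem_uIcc_of_abs_sub_midpoint_le (by rwa [sub_sub_cancel_left, abs_neg])
end

section
/- Let u* = (ρ*, m*, E*) ∈ ℝ⁴ and Δ = (Δρ, Δm, ΔE) ∈ ℝ⁴, and suppose ρ* > 0 and the internal energy of u* is positive. If θ ∈ [0, min(1, α·ρ*/|Δρ|)] ∩ [0, min(1, α·inf_w (u*·ψ(w))/|Δ·ψ(w)|)] with α > 0, then the state u* - (θ/α)Δ has nonnegative density and nonnegative internal energy. -/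
/-!
Both constraints are linear in the state, `u ↦ u.1` and `u ↦ psiDot u w`, so along the ray
`u - (θ / α) • Δ` each is an affine function of `θ` whose value at `θ = 0` is positive: for the
energy this is the completed square `2ρ (u·ψ(w)) = |ρw - m|² + 2ρ (E - |m|²/(2ρ))`. The bound
`θ ≤ α · (u·ψ) / |Δ·ψ|` keeps such an affine function nonnegative, uniformly in `w`.
-/

/-- The GQL constraint functional `u ↦ u·ψ(w)` with `ψ(w) = (|w|²/2, -w, 1)`,
for a state `u = (ρ, m₁, m₂, E)` and `w = (w₁, w₂)`. -/
noncomputable def psiDot (u : ℝ × ℝ × ℝ × ℝ) (w : ℝ × ℝ) : ℝ :=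
  u.1 * ((w.1 ^ 2 + w.2 ^ 2) / 2) - u.2.1 * w.1 - u.2.2.1 * w.2 + u.2.2.2

theorem sub_div_mul_nonneg_of_le_div_abs {a d α θ : ℝ} (hα : 0 < α) (hθ : 0 ≤ θ) (ha : 0 ≤ a)
    (h : d ≠ 0 → θ ≤ α * a / |d|) : 0 ≤ a - θ / α * d := by
  rcases eq_or_ne d 0 with rfl | hd
  · simpa using ha
  have hθd : θ * |d| ≤ α * a := (le_div_iff₀ (abs_pos.mpr hd)).mp (h hd)
  have : θ / α * d ≤ a :=
    calc θ / α * d ≤ θ / α * |d| := mul_le_mul_of_nonneg_left (le_abs_self d) (by positivity)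
      _ = θ * |d| / α := div_mul_eq_mul_div θ α |d|
      _ ≤ a := (div_le_iff₀ hα).mpr (by linarith)
  linarith

theorem psiDot_sub_smul (u Δ : ℝ × ℝ × ℝ × ℝ) (c : ℝ) (w : ℝ × ℝ) :
    psiDot (u - c • Δ) w = psiDot u w - c * psiDot Δ w := by
  simp only [psiDot, Prod.fst_sub, Prod.snd_sub, Prod.smul_fst, Prod.smul_snd, smul_eq_mul]
  ring

theorem psiDot_eq_sq_div_add_internal_energy (u : ℝ × ℝ × ℝ × ℝ) (hρ : u.1 ≠ 0) (w : ℝ × ℝ) :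
    psiDot u w = ((u.1 * w.1 - u.2.1) ^ 2 + (u.1 * w.2 - u.2.2.1) ^ 2) / (2 * u.1)
      + (u.2.2.2 - (u.2.1 ^ 2 + u.2.2.1 ^ 2) / (2 * u.1)) := by
  unfold psiDot
  field_simp
  ring

theorem psiDot_pos (u : ℝ × ℝ × ℝ × ℝ) (hρ : 0 < u.1)
    (he : 0 < u.2.2.2 - (u.2.1 ^ 2 + u.2.2.1 ^ 2) / (2 * u.1)) (w : ℝ × ℝ) :
    0 < psiDot u w := by
  rw [psiDot_eq_sq_div_add_internal_energy u hρ.ne' w]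
  positivity

theorem gql_density_energy_limiter_general (u Δ : ℝ × ℝ × ℝ × ℝ) (α θ : ℝ) (hα : 0 < α)
    (hρ : 0 < u.1)
    (he : 0 < u.2.2.2 - (u.2.1 ^ 2 + u.2.2.1 ^ 2) / (2 * u.1))
    (hθ0 : 0 ≤ θ)
    (hθρ : Δ.1 ≠ 0 → θ ≤ min 1 (α * u.1 / |Δ.1|))
    (hθe : ∀ w : ℝ × ℝ, psiDot Δ w ≠ 0 → θ ≤ min 1 (α * psiDot u w / |psiDot Δ w|)) :
    0 ≤ (u - (θ / α) • Δ).1 ∧ ∀ w : ℝ × ℝ, 0 ≤ psiDot (u - (θ / α) • Δ) w := by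
  refine ⟨?_, fun w => ?_⟩
  · simpa using sub_div_mul_nonneg_of_le_div_abs hα hθ0 hρ.le
      fun hΔ => (hθρ hΔ).trans (min_le_right _ _)
  · rw [psiDot_sub_smul]
    exact sub_div_mul_nonneg_of_le_div_abs hα hθ0 (psiDot_pos u hρ he w).le
      fun hΔ => (hθe w hΔ).trans (min_le_right _ _)

/-- Combined density/internal-energy limiter: if `u* = (ρ*, m*, E*)` has positive
density and internal energy and `θ` respects both the density and the GQL energy
constraints (with the convention that vanishing denominators impose no constraint),
then `u* - (θ/α)Δ` has nonnegative density and nonnegative internal energy. -/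
theorem gql_density_energy_limiter (u Δ : ℝ × ℝ × ℝ × ℝ) (α θ : ℝ) (hα : 0 < α)
    (hρ : 0 < u.1)
    (he : 0 < u.2.2.2 - (u.2.1 ^ 2 + u.2.2.1 ^ 2) / (2 * u.1))
    (hθ0 : 0 ≤ θ) (hθ1 : θ ≤ 1)
    (hθρ : Δ.1 ≠ 0 → θ ≤ min 1 (α * u.1 / |Δ.1|))
    (hθe : ∀ w : ℝ × ℝ, psiDot Δ w ≠ 0 → θ ≤ min 1 (α * psiDot u w / |psiDot Δ w|)) :
    0 ≤ (u - (θ / α) • Δ).1 ∧ ∀ w : ℝ × ℝ, 0 ≤ psiDot (u - (θ / α) • Δ) w :=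
  gql_density_energy_limiter_general u Δ α θ hα hρ he hθ0 hθρ hθe
end
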